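/- Let 0 ≤ r ≤ n−2 and let u ∈ E_n^{(r)}. Write u = x v with x ∈ X_n^{(r+2)} and v ∈ W_{r+2}. Then v ∈ E_{r+2}^{(r)}. -/

import Mathlib

/-!
Common setup: the Weyl group `W n` of type `B_n`, realized as the group of
permutations `w` of `I_n = {±1, …, ±n}` (inside `Equiv.Perm ℤ`, fixing every
integer of absolute value `> n`) such that `w (-i) = - w i` for all `i`.
-/

namespace TypeB

/-- The generator `t = (1, -1)`. -/
def t : Equiv.Perm ℤ := Equiv.swap 1 (-1)

/-- The generator `s i = (i, i+1)(-i, -(i+1))` (meaningful for `1 ≤ i`). -/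
def s (i : ℕ) : Equiv.Perm ℤ :=
  Equiv.swap (i : ℤ) ((i : ℤ) + 1) * Equiv.swap (-(i : ℤ)) (-((i : ℤ) + 1))

/-- The generating set `S_n = {t, s_1, …, s_{n-1}}`. -/
def gens (n : ℕ) : Set (Equiv.Perm ℤ) :=
  {t} ∪ {x | ∃ i : ℕ, 1 ≤ i ∧ i < n ∧ x = s i}

/-- The Weyl group `W_n` of type `B_n`, as a subgroup of `Equiv.Perm ℤ`:
permutations `w` with `w (-i) = - (w i)` for all `i` and fixing all `i` with `|i| > n`. -/
def W (n : ℕ) : Subgroup (Equiv.Perm ℤ) where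
  carrier := {w | (∀ i : ℤ, w (-i) = - w i) ∧ ∀ i : ℤ, (n : ℤ) < |i| → w i = i}
  one_mem' := ⟨fun _ => rfl, fun _ _ => rfl⟩
  mul_mem' := by
    rintro u v ⟨hu1, hu2⟩ ⟨hv1, hv2⟩
    refine ⟨fun i => ?_, fun i hi => ?_⟩
    · simp only [Equiv.Perm.mul_apply, hv1, hu1]
    · simp only [Equiv.Perm.mul_apply, hv2 i hi, hu2 i hi]
  inv_mem' := by
    rintro u ⟨hu1, hu2⟩
    refine ⟨fun i => ?_, fun i hi => ?_⟩
    · apply u.injective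
      rw [(fun y => (Equiv.eq_symm_apply u).mp rfl : ∀ y, u (u⁻¹ y) = y), hu1, (fun y => (Equiv.eq_symm_apply u).mp rfl : ∀ y, u (u⁻¹ y) = y)]
    · apply u.injective
      rw [(fun y => (Equiv.eq_symm_apply u).mp rfl : ∀ y, u (u⁻¹ y) = y), hu2 i hi]

/-- The length of `w` with respect to the generating set `S_n`. -/
noncomputable def len (n : ℕ) (w : Equiv.Perm ℤ) : ℕ :=
  sInf {k | ∃ l : List (Equiv.Perm ℤ), (∀ x ∈ l, x ∈ gens n) ∧ l.prod = w ∧ l.length = k}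

/-- `l` is a reduced expression for `w` with respect to `S_n`. -/
def IsReduced (n : ℕ) (w : Equiv.Perm ℤ) (l : List (Equiv.Perm ℤ)) : Prop :=
  (∀ x ∈ l, x ∈ gens n) ∧ l.prod = w ∧ l.length = len n w

/-- `ℓ_t w`: the number of occurrences of `t` in a reduced expression of `w`
(independent of the chosen reduced expression). -/
noncomputable def lent (n : ℕ) (w : Equiv.Perm ℤ) : ℕ :=
  letI : DecidableEq (Equiv.Perm ℤ) := Classical.decEq _
  sInf {m | ∃ l, IsReduced n w l ∧ l.count t = m}

/-- `r 1 = t` and `r (i+1) = s i * r i`. -/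
def r : ℕ → Equiv.Perm ℤ
  | 0 => 1
  | 1 => t
  | (i + 2) => s (i + 1) * r (i + 1)

/-- `t_1 = t` and `t_{i+1} = s_i * t_i * s_i`. -/
def tperm : ℕ → Equiv.Perm ℤ
  | 0 => 1
  | 1 => t
  | (i + 2) => s (i + 1) * tperm (i + 1) * s (i + 1)

/-- `a l = r 1 * r 2 * ⋯ * r l`, with `a 0 = 1`. -/
def a : ℕ → Equiv.Perm ℤ
  | 0 => 1
  | (l + 1) => a l * r (l + 1)

/-- The symmetric group `𝔖_n`: the subgroup generated by `s_1, …, s_{n-1}`. -/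
def Sym (n : ℕ) : Subgroup (Equiv.Perm ℤ) :=
  Subgroup.closure {x | ∃ i : ℕ, 1 ≤ i ∧ i < n ∧ x = s i}

/-- The parabolic subgroup `𝔖_{l,n-l}`: generated by `{s_1, …, s_{n-1}} \ {s_l}`. -/
def SymP (n l : ℕ) : Subgroup (Equiv.Perm ℤ) :=
  Subgroup.closure {x | ∃ i : ℕ, 1 ≤ i ∧ i < n ∧ i ≠ l ∧ x = s i}

/-- `Y_{l,n-l}`: elements of `𝔖_n` of minimal length in their coset `w 𝔖_{l,n-l}`. -/
def Y (n l : ℕ) : Set (Equiv.Perm ℤ) :=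
  {w | w ∈ Sym n ∧ ∀ u ∈ SymP n l, len n w ≤ len n (w * u)}

/-- The subgroup `𝔖_{[i,j]}` generated by `s_i, …, s_{j-1}`. -/
def SymI (i j : ℕ) : Subgroup (Equiv.Perm ℤ) :=
  Subgroup.closure {x | ∃ k : ℕ, i ≤ k ∧ k < j ∧ x = s k}

/-- The function reversing the interval `[i,j]` (and `[-j,-i]`), for `1 ≤ i`. -/
def revFun (i j : ℤ) : ℤ → ℤ := fun k =>
  if 1 ≤ i ∧ i ≤ k ∧ k ≤ j then i + j - k
  else if 1 ≤ i ∧ -j ≤ k ∧ k ≤ -i then -(i + j) - k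
  else k

lemma revFun_involutive (i j : ℤ) : Function.Involutive (revFun i j) := by
  intro k
  unfold revFun
  split_ifs <;> omega

/-- `σ_{[i,j]}`: the longest element of `𝔖_{[i,j]}`, i.e. the order-reversing
permutation of the interval `[i,j]` (extended to `I_n` by `w(-k) = -w(k)`). -/
def sigmaI (i j : ℕ) : Equiv.Perm ℤ := (revFun_involutive (i : ℤ) (j : ℤ)).toPerm

/-- `σ_{l,n-l}`: the longest element of `𝔖_{l,n-l} = 𝔖_{[1,l]} × 𝔖_{[l+1,n]}`. -/
def sigmaLL (n l : ℕ) : Equiv.Perm ℤ := sigmaI 1 l * sigmaI (l + 1) n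

/-- The function negating all `k` with `|k| ≤ n`. -/
def negnFun (n : ℤ) : ℤ → ℤ := fun k => if -n ≤ k ∧ k ≤ n then -k else k

lemma negnFun_involutive (n : ℤ) : Function.Involutive (negnFun n) := by
  intro k
  unfold negnFun
  split_ifs <;> omega

/-- `w_n`: the longest element of `W_n`; as a permutation, `w_n i = -i` for `|i| ≤ n`. -/
def wlong (n : ℕ) : Equiv.Perm ℤ := (negnFun_involutive (n : ℤ)).toPerm

/-- `c_I = s_{i_1} s_{i_2} ⋯ s_{i_k}` for `I = {i_1 < i_2 < ⋯ < i_k}`. -/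
def cElt (I : Finset ℕ) : Equiv.Perm ℤ := ((I.sort (· ≤ ·)).map s).prod

/-- `d_I = s_{i_k} ⋯ s_{i_2} s_{i_1}` for `I = {i_1 < i_2 < ⋯ < i_k}`. -/
def dElt (I : Finset ℕ) : Equiv.Perm ℤ := (((I.sort (· ≤ ·)).map s).reverse).prod

/-- `X_n^{(m)}`: elements of `W_n` of minimal length in their coset `w W_m`. -/
def X (n m : ℕ) : Set (Equiv.Perm ℤ) :=
  {w | w ∈ W n ∧ ∀ u ∈ W m, len n w ≤ len n (w * u)}

/-- Bruhat order: `x ≤ y` iff some reduced expression of `y` contains a subword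
which is a reduced expression of `x`. -/
def BruhatLE (n : ℕ) (x y : Equiv.Perm ℤ) : Prop :=
  ∃ ly, IsReduced n y ly ∧ ∃ lx, lx.Sublist ly ∧ IsReduced n x lx

/-- Strict Bruhat order. -/
def BruhatLT (n : ℕ) (x y : Equiv.Perm ℤ) : Prop := BruhatLE n x y ∧ x ≠ y

/-- `D_i(W_n)`: the set of `x` such that exactly one of `s_i, s_{i+1}` is a
(right) descent of `x`. -/
def Dset (n i : ℕ) : Set (Equiv.Perm ℤ) :=
  {x | Xor' (len n (x * s i) < len n x) (len n (x * s (i + 1)) < len n x)}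

open Classical in
/-- `γ_i x`: the unique element of `{x s_i, x s_{i+1}} ∩ D_i(W_n)` (for `x ∈ D_i(W_n)`). -/
noncomputable def gamma (n i : ℕ) (x : Equiv.Perm ℤ) : Equiv.Perm ℤ :=
  if x * s i ∈ Dset n i then x * s i else x * s (i + 1)

/-- `E_m^{(r)}`: the set of `w ∈ W_m` such that `|w 1| > |w i|` for `2 ≤ i ≤ r+2`
and `(w 2, …, w (r+2))` is a shuffle of a positive decreasing sequence and a
negative increasing sequence. -/
def E (m ρ : ℕ) : Set (Equiv.Perm ℤ) :=
  {w | w ∈ W m ∧ (∀ i : ℕ, 2 ≤ i → i ≤ ρ + 2 → |w (i : ℤ)| < |w (1 : ℤ)|) ∧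
    ∀ i j : ℕ, 2 ≤ i → i < j → j ≤ ρ + 2 →
      (0 < w (i : ℤ) → 0 < w (j : ℤ) → w (j : ℤ) < w (i : ℤ)) ∧
      (w (i : ℤ) < 0 → w (j : ℤ) < 0 → w (i : ℤ) < w (j : ℤ))}

/-- The product `r_{i_1} ⋯ r_{i_l}` for a sequence `i : Fin l → ℕ`. -/
def prodR {l : ℕ} (i : Fin l → ℕ) : Equiv.Perm ℤ := (List.ofFn fun k => r (i k)).prod

/-- `(l, α, β, σ)` is a decomposition of `w` as in the decomposition lemma:
`l ≤ n`, `α, β ∈ Y_{l,n-l}`, `σ ∈ 𝔖_{l,n-l}` and `w = α a_l σ β⁻¹`. -/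
def IsDecomp (n : ℕ) (w : Equiv.Perm ℤ) (l : ℕ) (α β σ : Equiv.Perm ℤ) : Prop :=
  l ≤ n ∧ α ∈ Y n l ∧ β ∈ Y n l ∧ σ ∈ SymP n l ∧ w = α * a l * σ * β⁻¹

/-!
The Coxeter length of a signed permutation is the statistic `inv + neg + nsp` of Björner–Brenti:
it changes by `±1` under right multiplication by `t` or `s i`, according to the sign of `w 1`
or the order of `w i, w (i + 1)`. Hence a minimal representative `x` of `x W_m` satisfies
`0 < x 1 < x 2 < ⋯ < x m`, and being odd it is strictly increasing and sign preserving on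
`{a | 1 ≤ |a| ≤ m}`, with `|x a| = x |a|` there. Since `v` takes `1, …, m` into this set, every
condition defining `E` transfers from `u = x v` back to `v`.
-/

open Finset

lemma t_apply (k : ℤ) : t k = if k = 1 then -1 else if k = -1 then 1 else k :=
  Equiv.swap_apply_def 1 (-1) k

lemma s_apply {i : ℕ} (hi : 1 ≤ i) (k : ℤ) : s i k =
    if k = i then (i : ℤ) + 1 else if k = (i : ℤ) + 1 then (i : ℤ)
    else if k = -(i : ℤ) then -((i : ℤ) + 1) else if k = -((i : ℤ) + 1) then -(i : ℤ) else k := by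
  simp only [s, Equiv.Perm.mul_apply, Equiv.swap_apply_def]
  split_ifs <;> omega

lemma s_apply_of_pos {i : ℕ} (hi : 1 ≤ i) {k : ℤ} (hk : 1 ≤ k) :
    s i k = if k = i then (i : ℤ) + 1 else if k = (i : ℤ) + 1 then (i : ℤ) else k := by
  rw [s_apply hi]
  split_ifs <;> omega

lemma s_apply_s {i : ℕ} (hi : 1 ≤ i) (k : ℤ) : s i (s i k) = k := by
  simp only [s_apply hi]
  split_ifs <;> omega

lemma s_apply_self {i : ℕ} (hi : 1 ≤ i) : s i i = i + 1 := by
  rw [s_apply hi, if_pos rfl]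

lemma s_apply_add_one {i : ℕ} (hi : 1 ≤ i) : s i (i + 1) = i := by
  rw [s_apply hi, if_neg (by omega), if_pos rfl]

lemma s_lt_s_iff {i : ℕ} (hi : 1 ≤ i) {a b : ℤ} (ha : 1 ≤ a) (hb : 1 ≤ b)
    (h : ¬(a = i ∧ b = i + 1)) (h' : ¬(a = i + 1 ∧ b = i)) : s i a < s i b ↔ a < b := by
  rw [s_apply_of_pos hi ha, s_apply_of_pos hi hb]
  split_ifs <;> omega

lemma s_le_s_iff {i : ℕ} (hi : 1 ≤ i) {a b : ℤ} (ha : 1 ≤ a) (hb : 1 ≤ b)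
    (h : ¬(a = i ∧ b = i + 1)) (h' : ¬(a = i + 1 ∧ b = i)) : s i a ≤ s i b ↔ a ≤ b := by
  rw [s_apply_of_pos hi ha, s_apply_of_pos hi hb]
  split_ifs <;> omega

lemma t_mem_W {n : ℕ} (hn : 1 ≤ n) : t ∈ W n := by
  refine ⟨fun k => ?_, fun k hk => ?_⟩
  · simp only [t_apply]
    split_ifs <;> omega
  · rw [lt_abs] at hk
    rw [t_apply]
    split_ifs <;> omega

lemma s_mem_W {n i : ℕ} (hi : 1 ≤ i) (hin : i < n) : s i ∈ W n := by
  refine ⟨fun k => ?_, fun k hk => ?_⟩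
  · simp only [s_apply hi]
    split_ifs <;> omega
  · rw [lt_abs] at hk
    rw [s_apply hi]
    split_ifs <;> omega

lemma gens_subset_W {n : ℕ} (hn : 1 ≤ n) : gens n ⊆ W n := by
  rintro g (rfl | ⟨i, hi, hin, rfl⟩)
  exacts [t_mem_W hn, s_mem_W hi hin]

lemma mul_self_of_mem_gens {n : ℕ} {g : Equiv.Perm ℤ} (hg : g ∈ gens n) : g * g = 1 := by
  rcases hg with rfl | ⟨i, hi, -, rfl⟩
  · exact Equiv.swap_mul_self _ _
  · exact Equiv.ext (s_apply_s hi)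

lemma W_mono : Monotone W := fun _ _ hmn _ hw =>
  ⟨hw.1, fun i hi => hw.2 i (lt_of_le_of_lt (by exact_mod_cast hmn) hi)⟩

section WeylGroup

variable {n : ℕ} {w : Equiv.Perm ℤ}

lemma apply_zero_of_mem_W (hw : w ∈ W n) : w 0 = 0 := by
  have h := hw.1 0
  rw [neg_zero] at h
  omega

lemma apply_ne_zero_of_mem_W (hw : w ∈ W n) {k : ℤ} (hk : k ≠ 0) : w k ≠ 0 :=
  fun h => hk (w.injective (h.trans (apply_zero_of_mem_W hw).symm))

lemma abs_apply_le_of_mem_W (hw : w ∈ W n) {k : ℤ} (hk : |k| ≤ n) : |w k| ≤ n := by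
  by_contra! h
  rw [w.injective (hw.2 _ h)] at h
  omega

lemma abs_apply_mem_Icc_of_mem_W (hw : w ∈ W n) {k : ℤ} (hk : k ≠ 0) (hkn : |k| ≤ n) :
    |w k| ∈ Set.Icc (1 : ℤ) n :=
  ⟨Int.one_le_abs (apply_ne_zero_of_mem_W hw hk), abs_apply_le_of_mem_W hw hkn⟩

lemma eq_one_of_mem_W (hw : w ∈ W n) (h : ∀ k : ℤ, 1 ≤ k → k ≤ n → w k = k) : w = 1 := by
  ext k
  rcases lt_trichotomy k 0 with hk | rfl | hk
  · by_cases hkn : -k ≤ n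
    · have := hw.1 (-k)
      rw [neg_neg, h (-k) (by omega) hkn] at this
      simp only [Equiv.Perm.one_apply]
      omega
    · exact hw.2 k (by rw [abs_of_neg hk]; omega)
  · exact apply_zero_of_mem_W hw
  · by_cases hkn : k ≤ n
    · exact h k hk hkn
    · exact hw.2 k (by rw [abs_of_pos hk]; omega)

lemma exists_descent (hw : w ∈ W n) (hne : w ≠ 1) :
    w 1 < 0 ∨ ∃ i : ℕ, 1 ≤ i ∧ i < n ∧ w (i + 1) < w i := by
  by_contra! h
  obtain ⟨h1, hasc⟩ := h
  refine hne (eq_one_of_mem_W hw fun k hk hkn => ?_)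
  -- `k ↦ w k - k` is monotone on `[1, n]`, and `w 1 - 1 ≥ 0 ≥ w n - n`.
  have hmono : MonotoneOn (fun k => w k - k) (Set.Icc 1 n) := by
    refine monotoneOn_of_le_succ Set.ordConnected_Icc fun a _ ha hsa => ?_
    rw [Order.succ_eq_add_one] at hsa ⊢
    rw [Set.mem_Icc] at ha hsa
    obtain ⟨i, rfl⟩ := Int.eq_ofNat_of_zero_le (by omega : 0 ≤ a)
    have hle := hasc i (by omega) (by omega)
    have hne : w i ≠ w (i + 1) := fun h => by simpa using w.injective h
    omega
  have hk1 := hmono ⟨le_rfl, by omega⟩ ⟨hk, hkn⟩ hk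
  have hkn' := hmono ⟨hk, hkn⟩ ⟨by omega, le_rfl⟩ hkn
  have hw1 := apply_ne_zero_of_mem_W hw one_ne_zero
  have hwn := abs_apply_le_of_mem_W hw (k := n) (by rw [abs_of_nonneg (by omega)])
  simp only at hk1 hkn'
  rw [abs_le] at hwn
  omega

end WeylGroup

/-- Summed over `[1, n]²` this is the length formula `inv + neg + nsp` of Björner–Brenti
(*Combinatorics of Coxeter groups*, Prop. 8.1.1); the diagonal pairs of the second summand count
the negative entries. -/
def pairWeight (w : Equiv.Perm ℤ) (p : ℤ × ℤ) : ℕ :=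
  (if p.1 < p.2 ∧ w p.2 < w p.1 then 1 else 0) + (if p.1 ≤ p.2 ∧ w p.1 + w p.2 < 0 then 1 else 0)

noncomputable def combLen (n : ℕ) (w : Equiv.Perm ℤ) : ℕ :=
  ∑ p ∈ Icc (1 : ℤ) n ×ˢ Icc (1 : ℤ) n, pairWeight w p

section CombLen

variable {n : ℕ} {w : Equiv.Perm ℤ}

lemma combLen_one : combLen n 1 = 0 := by
  refine sum_eq_zero fun p hp => ?_
  simp only [mem_product, mem_Icc] at hp
  unfold pairWeight
  rw [if_neg fun h => lt_asymm h.1 h.2,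
    if_neg fun h => by simp only [Equiv.Perm.one_apply] at h; omega, add_zero]

lemma mul_t_apply (hw : w ∈ W n) {k : ℤ} (hk : 1 ≤ k) :
    (w * t) k = if k = 1 then -w 1 else w k := by
  rw [Equiv.Perm.mul_apply, t_apply]
  split_ifs
  · exact hw.1 1
  · omega
  · rfl

lemma pairWeight_mul_t (hw : w ∈ W n) {p : ℤ × ℤ} (ha : 1 ≤ p.1) (hb : 1 ≤ p.2)
    (hab : p ≠ (1, 1)) :
    pairWeight (w * t) p = pairWeight w p := by
  obtain ⟨a, b⟩ := p
  simp only [pairWeight, mul_t_apply hw ha, mul_t_apply hw hb]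
  rcases eq_or_ne a 1 with rfl | ha
  · have hb : b ≠ 1 := fun h => hab (by rw [h])
    simp only [↓reduceIte, hb]
    split_ifs <;> omega
  · rcases eq_or_ne b 1 with rfl | hb
    · simp only [↓reduceIte]
      split_ifs <;> omega
    · simp only [ha, hb, ↓reduceIte]

lemma combLen_mul_t (hn : 1 ≤ n) (hw : w ∈ W n) :
    combLen n (w * t) + (if w 1 < 0 then 1 else 0) = combLen n w + (if 0 < w 1 then 1 else 0) := by
  have hmem : ((1 : ℤ), (1 : ℤ)) ∈ Icc (1 : ℤ) n ×ˢ Icc (1 : ℤ) n := by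
    simp only [mem_product, mem_Icc]
    omega
  have hrest : ∑ p ∈ (Icc (1 : ℤ) n ×ˢ Icc (1 : ℤ) n).erase (1, 1), pairWeight (w * t) p =
      ∑ p ∈ (Icc (1 : ℤ) n ×ˢ Icc (1 : ℤ) n).erase (1, 1), pairWeight w p :=
    sum_congr rfl fun p hp => by
      simp only [mem_erase, mem_product, mem_Icc] at hp
      exact pairWeight_mul_t hw hp.2.1.1 hp.2.2.1 hp.1
  have h11 : pairWeight (w * t) (1, 1) + (if w 1 < 0 then 1 else 0) =
      pairWeight w (1, 1) + (if 0 < w 1 then 1 else 0) := by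
    simp only [pairWeight, mul_t_apply hw le_rfl, ↓reduceIte]
    split_ifs <;> omega
  rw [combLen, combLen, ← add_sum_erase _ _ hmem, ← add_sum_erase _ _ hmem, hrest]
  omega

lemma pairWeight_adjacent (a : ℤ) : pairWeight w (a, a + 1) =
    (if w (a + 1) < w a then 1 else 0) + (if w a + w (a + 1) < 0 then 1 else 0) := by
  simp only [pairWeight, lt_add_iff_pos_right, zero_lt_one, true_and, le_add_iff_nonneg_right,
    zero_le_one]

lemma pairWeight_of_lt {a b : ℤ} (h : b < a) : pairWeight w (a, b) = 0 := by
  simp only [pairWeight]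
  rw [if_neg (by omega), if_neg (by omega)]

lemma combLen_mul_s {i : ℕ} (hi : 1 ≤ i) (hin : i < n) :
    combLen n (w * s i) + (if w (i + 1) < w i then 1 else 0) =
      combLen n w + (if w i < w (i + 1) then 1 else 0) := by
  set T := Icc (1 : ℤ) n ×ˢ Icc (1 : ℤ) n
  have hmem : ((i : ℤ), (i : ℤ) + 1) ∈ T ∧ ((i : ℤ) + 1, (i : ℤ)) ∈ T := by
    simp only [T, mem_product, mem_Icc]
    omega
  have hreindex : combLen n (w * s i) = ∑ p ∈ T, pairWeight (w * s i) (s i p.1, s i p.2) := by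
    refine (sum_equiv ((s i).prodCongr (s i)) (fun p => ?_) fun _ _ => rfl).symm
    simp only [T, mem_product, mem_Icc, Equiv.prodCongr_apply, Prod.map, s_apply hi]
    split_ifs <;> omega
  -- After relabelling by `s i`, the weights of `w * s i` and `w` differ only at `(i, i + 1)` and
  -- `(i + 1, i)`.
  have key : ∀ p ∈ T,
      pairWeight (w * s i) (s i p.1, s i p.2) +
          (if p = ((i : ℤ), (i : ℤ) + 1) then pairWeight w (i, i + 1) else 0) =
        pairWeight w p +
          (if p = ((i : ℤ) + 1, (i : ℤ)) then pairWeight (w * s i) (i, i + 1) else 0) := by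
    rintro ⟨a, b⟩ hp
    simp only [T, mem_product, mem_Icc] at hp
    by_cases h₁ : a = i ∧ b = i + 1
    · obtain ⟨rfl, rfl⟩ := h₁
      simp [s_apply_self hi, s_apply_add_one hi, pairWeight_of_lt]
    by_cases h₂ : a = i + 1 ∧ b = i
    · obtain ⟨rfl, rfl⟩ := h₂
      simp [s_apply_self hi, s_apply_add_one hi, pairWeight_of_lt]
    simp only [Prod.mk.injEq, if_neg h₁, if_neg h₂, pairWeight, Equiv.Perm.mul_apply, s_apply_s hi,
      s_lt_s_iff hi hp.1.1 hp.2.1 h₁ h₂, s_le_s_iff hi hp.1.1 hp.2.1 h₁ h₂]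
  have := sum_congr rfl key
  rw [sum_add_distrib, sum_add_distrib, sum_ite_eq', sum_ite_eq', if_pos hmem.1, if_pos hmem.2,
    ← hreindex, show ∑ p ∈ T, pairWeight w p = combLen n w from rfl] at this
  rw [pairWeight_adjacent, pairWeight_adjacent] at this
  simp only [Equiv.Perm.mul_apply, s_apply_self hi, s_apply_add_one hi] at this
  split_ifs at this ⊢ <;> omega

lemma combLen_mul_le (hn : 1 ≤ n) (hw : w ∈ W n) {g : Equiv.Perm ℤ} (hg : g ∈ gens n) :
    combLen n (w * g) ≤ combLen n w + 1 := by
  rcases hg with rfl | ⟨i, hi, hin, rfl⟩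
  · have := combLen_mul_t hn hw
    split_ifs at this <;> omega
  · have := combLen_mul_s (w := w) hi hin
    split_ifs at this <;> omega

lemma exists_combLen_mul_add_one (hn : 1 ≤ n) (hw : w ∈ W n) (hne : w ≠ 1) :
    ∃ g ∈ gens n, combLen n (w * g) + 1 = combLen n w := by
  rcases exists_descent hw hne with h | ⟨i, hi, hin, h⟩
  · refine ⟨t, Or.inl rfl, ?_⟩
    have := combLen_mul_t hn hw
    rw [if_pos h, if_neg (by omega)] at this
    omega
  · refine ⟨s i, Or.inr ⟨i, hi, hin, rfl⟩, ?_⟩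
    have := combLen_mul_s (w := w) hi hin
    rw [if_pos h, if_neg (by omega)] at this
    omega

lemma combLen_prod_le_length (hn : 1 ≤ n) {l : List (Equiv.Perm ℤ)} (hl : ∀ g ∈ l, g ∈ gens n) :
    combLen n l.prod ≤ l.length := by
  induction l using List.reverseRecOn with
  | nil => simp [combLen_one]
  | append_singleton l g ih =>
    have hl' : ∀ x ∈ l, x ∈ gens n := fun x hx => hl x (List.mem_append_left _ hx)
    have hprod : l.prod ∈ W n := Subgroup.list_prod_mem _ fun x hx => gens_subset_W hn (hl' x hx)
    rw [List.prod_append, List.prod_singleton, List.length_append, List.length_singleton]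
    exact (combLen_mul_le hn hprod (hl g (by simp))).trans (by have := ih hl'; omega)

lemma exists_word_length_eq_combLen (hn : 1 ≤ n) (hw : w ∈ W n) :
    ∃ l : List (Equiv.Perm ℤ), (∀ g ∈ l, g ∈ gens n) ∧ l.prod = w ∧ l.length = combLen n w := by
  induction hk : combLen n w using Nat.strong_induction_on generalizing w with
  | _ k ih =>
  by_cases h1 : w = 1
  · subst h1
    exact ⟨[], by simp, rfl, by rw [← hk, combLen_one]; rfl⟩
  obtain ⟨g, hg, hlen⟩ := exists_combLen_mul_add_one hn hw h1
  obtain ⟨l, hl, hprod, hlength⟩ :=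
    ih _ (by omega) ((W n).mul_mem hw (gens_subset_W hn hg)) rfl
  refine ⟨l ++ [g], ?_, ?_, ?_⟩
  · simpa [or_imp, forall_and] using ⟨hl, hg⟩
  · rw [List.prod_append, hprod, List.prod_singleton, mul_assoc, mul_self_of_mem_gens hg, mul_one]
  · rw [List.length_append, hlength, List.length_singleton]
    omega

theorem len_eq_combLen (hn : 1 ≤ n) (hw : w ∈ W n) : len n w = combLen n w := by
  obtain ⟨l, hl, hprod, hlength⟩ := exists_word_length_eq_combLen hn hw
  refine le_antisymm (Nat.sInf_le ⟨l, hl, hprod, hlength⟩) (le_csInf ⟨_, l, hl, hprod, rfl⟩ ?_)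
  rintro _ ⟨l', hl', rfl, rfl⟩
  exact combLen_prod_le_length hn hl'

end CombLen

section MinimalCosetRepresentative

variable {n m : ℕ} {x : Equiv.Perm ℤ}

lemma combLen_le_combLen_mul_of_mem_X (hm : 1 ≤ m) (hmn : m ≤ n) (hx : x ∈ X n m)
    {g : Equiv.Perm ℤ} (hg : g ∈ W m) : combLen n x ≤ combLen n (x * g) := by
  have hn : 1 ≤ n := hm.trans hmn
  rw [← len_eq_combLen hn hx.1, ← len_eq_combLen hn ((W n).mul_mem hx.1 (W_mono hmn hg))]
  exact hx.2 g hg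

lemma apply_one_pos_of_mem_X (hm : 1 ≤ m) (hmn : m ≤ n) (hx : x ∈ X n m) : 0 < x 1 := by
  have hmin := combLen_le_combLen_mul_of_mem_X hm hmn hx (t_mem_W hm)
  have hstep := combLen_mul_t (hm.trans hmn) hx.1
  have := apply_ne_zero_of_mem_W hx.1 one_ne_zero
  split_ifs at hstep <;> omega

lemma strictMonoOn_of_mem_X (hmn : m ≤ n) (hx : x ∈ X n m) : StrictMonoOn x (Set.Icc 1 m) := by
  refine strictMonoOn_of_lt_succ Set.ordConnected_Icc fun a _ ha hsa => ?_
  rw [Order.succ_eq_add_one] at hsa ⊢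
  rw [Set.mem_Icc] at ha hsa
  obtain ⟨i, rfl⟩ := Int.eq_ofNat_of_zero_le (by omega : 0 ≤ a)
  have hmin :=
    combLen_le_combLen_mul_of_mem_X (by omega) hmn hx (s_mem_W (i := i) (by omega) (by omega))
  have hstep := combLen_mul_s (w := x) (n := n) (i := i) (by omega) (by omega)
  have := x.injective.ne (show (i : ℤ) ≠ i + 1 by omega)
  split_ifs at hstep <;> omega

end MinimalCosetRepresentative

structure IsOddIncreasing (m : ℕ) (x : Equiv.Perm ℤ) : Prop where
  map_neg : ∀ k, x (-k) = -x k
  apply_one_pos : 0 < x 1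
  strictMonoOn : StrictMonoOn x (Set.Icc 1 m)

namespace IsOddIncreasing

variable {m : ℕ} {x : Equiv.Perm ℤ} (hx : IsOddIncreasing m x)
include hx

lemma apply_pos {k : ℤ} (hk : k ∈ Set.Icc (1 : ℤ) m) : 0 < x k := by
  rcases hk.1.eq_or_lt with rfl | h
  · exact hx.apply_one_pos
  · exact hx.apply_one_pos.trans (hx.strictMonoOn ⟨le_rfl, hk.1.trans hk.2⟩ hk h)

lemma apply_neg {k : ℤ} (hk : -k ∈ Set.Icc (1 : ℤ) m) : x k < 0 := by
  have := hx.apply_pos hk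
  rw [hx.map_neg] at this
  omega

lemma pos_iff {a : ℤ} (ha : |a| ∈ Set.Icc (1 : ℤ) m) : 0 < x a ↔ 0 < a := by
  rcases abs_cases a with ⟨h, -⟩ | ⟨h, ha0⟩ <;> rw [h] at ha
  · have := hx.apply_pos ha
    have := ha.1
    omega
  · have := hx.apply_neg ha
    omega

lemma neg_iff {a : ℤ} (ha : |a| ∈ Set.Icc (1 : ℤ) m) : x a < 0 ↔ a < 0 := by
  have := hx.pos_iff (a := -a) (by rwa [abs_neg])
  rw [hx.map_neg] at this
  omega

lemma abs_apply {a : ℤ} (ha : |a| ∈ Set.Icc (1 : ℤ) m) : |x a| = x |a| := by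
  rcases abs_cases a with ⟨h, -⟩ | ⟨h, -⟩ <;> rw [h] at ha ⊢
  · exact abs_of_pos (hx.apply_pos ha)
  · rw [hx.map_neg, abs_of_neg (hx.apply_neg ha)]

lemma strictMonoOn_abs_mem_Icc : StrictMonoOn x {a | |a| ∈ Set.Icc (1 : ℤ) m} := by
  intro a (ha : |a| ∈ Set.Icc (1 : ℤ) m) b (hb : |b| ∈ Set.Icc (1 : ℤ) m) hab
  rcases abs_cases a with ⟨h, -⟩ | ⟨h, -⟩ <;> rw [h] at ha <;>
    rcases abs_cases b with ⟨h', -⟩ | ⟨h', -⟩ <;> rw [h'] at hb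
  · exact hx.strictMonoOn ha hb hab
  · have := ha.1
    have := hb.1
    omega
  · exact (hx.apply_neg ha).trans (hx.apply_pos hb)
  · have := hx.strictMonoOn hb ha (neg_lt_neg hab)
    rw [hx.map_neg, hx.map_neg] at this
    omega

end IsOddIncreasing

lemma isOddIncreasing_of_mem_X {n m : ℕ} {x : Equiv.Perm ℤ} (hm : 1 ≤ m) (hmn : m ≤ n)
    (hx : x ∈ X n m) : IsOddIncreasing m x :=
  ⟨hx.1.1, apply_one_pos_of_mem_X hm hmn hx, strictMonoOn_of_mem_X hmn hx⟩

/-- for `0 ≤ ρ ≤ n-2` and `u ∈ E_n^{(ρ)}`, writing `u = x v` with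
`x ∈ X_n^{(ρ+2)}` and `v ∈ W_{ρ+2}`, one has `v ∈ E_{ρ+2}^{(ρ)}`. -/
theorem stmt18 (n ρ : ℕ) (hρ : ρ + 2 ≤ n) (u : Equiv.Perm ℤ) (hu : u ∈ E n ρ)
    (x v : Equiv.Perm ℤ) (hx : x ∈ X n (ρ + 2)) (hv : v ∈ W (ρ + 2))
    (huxv : u = x * v) :
    v ∈ E (ρ + 2) ρ := by
  have hx' := isOddIncreasing_of_mem_X (by omega) hρ hx
  have hvI : ∀ k : ℤ, 1 ≤ k → k ≤ ↑(ρ + 2) → |v k| ∈ Set.Icc (1 : ℤ) ↑(ρ + 2) := fun k h1 h2 =>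
    abs_apply_mem_Icc_of_mem_W hv (by omega) (by rwa [abs_of_pos (by omega)])
  obtain ⟨-, habs, hshuffle⟩ := hu
  subst huxv
  refine ⟨hv, fun i hi hiρ => ?_, fun i j hi hij hjρ => ⟨fun hvi hvj => ?_, fun hvi hvj => ?_⟩⟩
  · have h := habs i hi hiρ
    have hvi := hvI i (by omega) (by omega)
    have hv1 := hvI 1 le_rfl (by omega)
    rw [Equiv.Perm.mul_apply, Equiv.Perm.mul_apply, hx'.abs_apply hvi, hx'.abs_apply hv1] at h
    exact (hx'.strictMonoOn.lt_iff_lt hvi hv1).1 h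
  · have hi' := hvI i (by omega) (by omega)
    have hj' := hvI j (by omega) (by omega)
    exact (hx'.strictMonoOn_abs_mem_Icc.lt_iff_lt hj' hi').1
      ((hshuffle i j hi hij hjρ).1 ((hx'.pos_iff hi').2 hvi) ((hx'.pos_iff hj').2 hvj))
  · have hi' := hvI i (by omega) (by omega)
    have hj' := hvI j (by omega) (by omega)
    exact (hx'.strictMonoOn_abs_mem_Icc.lt_iff_lt hi' hj').1
      ((hshuffle i j hi hij hjρ).2 ((hx'.neg_iff hi').2 hvi) ((hx'.neg_iff hj').2 hvj))

end TypeB
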